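/- arXiv:2212.04724 — 4 statements merged into one kernel-verified Lean document; each statement's English description precedes it below -/
import Mathlib

section
/- If a production set T ⊆ ℝ₊ⁿ⁺ᵖ has Λ-bounded returns to scale, then there exists a smallest technology T_Λ containing T that satisfies a Λ-returns to scale assumption; i.e., for any T' with T ⊆ T' and T' satisfying a Λ-returns to scale assumption, T_Λ ⊆ T'. -/
open scoped ENNReal

/-- Points of `ℝ₊ⁿ⁺ᵖ`: nonnegative input-output vectors. -/
def nonneg (n p : ℕ) : Set ((Fin n → ℝ) × (Fin p → ℝ)) :=
  {v | 0 ≤ v.1 ∧ 0 ≤ v.2}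

/-- Scaling of a production vector by `l` under `α`-returns to scale,
with the conventions at `α = 0` and `α = ∞`. -/
noncomputable def scalePt {n p : ℕ} (α : ℝ≥0∞) (l : ℝ)
    (v : (Fin n → ℝ) × (Fin p → ℝ)) : (Fin n → ℝ) × (Fin p → ℝ) :=
  if α = 0 then (l • v.1, v.2)
  else if α = ⊤ then (v.1, l • v.2)
  else (l • v.1, l ^ α.toReal • v.2)

/-- `T` satisfies an `α`-returns to scale assumption. -/
def satRTS {n p : ℕ} (α : ℝ≥0∞) (T : Set ((Fin n → ℝ) × (Fin p → ℝ))) : Prop :=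
  ∀ v ∈ T, ∀ l : ℝ, 0 < l → scalePt α l v ∈ T

/-- `T` satisfies a `Λ`-returns to scale assumption. -/
def satLambdaRTS {n p : ℕ} (Λ : Set ℝ≥0∞)
    (T : Set ((Fin n → ℝ) × (Fin p → ℝ))) : Prop :=
  ∃ F : ℝ≥0∞ → Set ((Fin n → ℝ) × (Fin p → ℝ)),
    (∀ α ∈ Λ, satRTS α (F α)) ∧ T = ⋂ α ∈ Λ, F α

/-- The returns to scale of `T` are `Λ`-bounded. -/
def lambdaBounded {n p : ℕ} (Λ : Set ℝ≥0∞)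
    (T : Set ((Fin n → ℝ) × (Fin p → ℝ))) : Prop :=
  ∃ T', T ⊆ T' ∧ satLambdaRTS Λ T'

/-- Free disposability of inputs and outputs. -/
def freeDisposal {n p : ℕ} (T : Set ((Fin n → ℝ) × (Fin p → ℝ))) : Prop :=
  ∀ v ∈ T, ∀ u w, v.1 ≤ u → 0 ≤ w → w ≤ v.2 → (u, w) ∈ T

theorem satRTS_iInter {n p : ℕ} {ι : Sort*} {α : ℝ≥0∞}
    {T : ι → Set ((Fin n → ℝ) × (Fin p → ℝ))} (h : ∀ i, satRTS α (T i)) :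
    satRTS α (⋂ i, T i) := fun v hv l hl =>
  Set.mem_iInter.2 fun i => h i v (Set.mem_iInter.1 hv i) l hl

theorem satLambdaRTS_iInter {n p : ℕ} {ι : Sort*} {Λ : Set ℝ≥0∞}
    {T : ι → Set ((Fin n → ℝ) × (Fin p → ℝ))} (h : ∀ i, satLambdaRTS Λ (T i)) :
    satLambdaRTS Λ (⋂ i, T i) := by
  choose F hF hTF using h
  refine ⟨fun α => ⋂ i, F i α, fun α hα => satRTS_iInter fun i => hF i α hα, ?_⟩
  simp_rw [hTF, Set.iInter_comm (ι := ι)]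

theorem satLambdaRTS_sInter {n p : ℕ} {Λ : Set ℝ≥0∞}
    {S : Set (Set ((Fin n → ℝ) × (Fin p → ℝ)))} (h : ∀ T ∈ S, satLambdaRTS Λ T) :
    satLambdaRTS Λ (⋂₀ S) := by
  rw [Set.sInter_eq_iInter]
  exact satLambdaRTS_iInter fun T => h T T.2

theorem stmt0_general (n p : ℕ) (Λ : Set ℝ≥0∞) (T : Set ((Fin n → ℝ) × (Fin p → ℝ))) :
    ∃ TΛ : Set ((Fin n → ℝ) × (Fin p → ℝ)),
      T ⊆ TΛ ∧ satLambdaRTS Λ TΛ ∧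
      ∀ T', T ⊆ T' → satLambdaRTS Λ T' → TΛ ⊆ T' :=
  ⟨⋂₀ {T' | T ⊆ T' ∧ satLambdaRTS Λ T'}, Set.subset_sInter fun _ hT' => hT'.1,
    satLambdaRTS_sInter fun _ hT' => hT'.2,
    fun _ hsub hRTS => Set.sInter_subset_of_mem ⟨hsub, hRTS⟩⟩

/-- If a production set `T ⊆ ℝ₊ⁿ⁺ᵖ` has `Λ`-bounded returns to scale, then there exists a
smallest technology containing `T` that satisfies a `Λ`-returns to scale assumption. -/
theorem stmt0 (n p : ℕ) (Λ : Set ℝ≥0∞) (T : Set ((Fin n → ℝ) × (Fin p → ℝ)))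
    (hT : T ⊆ nonneg n p) (hbdd : lambdaBounded Λ T) :
    ∃ TΛ : Set ((Fin n → ℝ) × (Fin p → ℝ)),
      T ⊆ TΛ ∧ satLambdaRTS Λ TΛ ∧
      ∀ T', T ⊆ T' → satLambdaRTS Λ T' → TΛ ⊆ T' :=
  stmt0_general n p Λ T
end

section
/- Let Λ = [α₋, α₊] be a closed connected subinterval of [0,∞) with α₊ < ∞. If T satisfies a Λ-returns to scale assumption where each T_α (α ∈ Λ) satisfies free disposability, then T satisfies a left-α₊ returns to scale assumption: for all (x,y) ∈ T and all λ ∈ (0,1], (λx, λ^{α₊} y) ∈ T. -/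
open scoped ENNReal

def satLeftRTS {n p : ℕ} (β : ℝ) (T : Set ((Fin n → ℝ) × (Fin p → ℝ))) : Prop :=
  ∀ v ∈ T, ∀ l : ℝ, 0 < l → l ≤ 1 → (l • v.1, l ^ β • v.2) ∈ T

/-- The convention of `scalePt` at `α = 0` agrees with the generic formula, as `l ^ 0 = 1`. -/
lemma scalePt_of_ne_top {n p : ℕ} {α : ℝ≥0∞} (hα : α ≠ ⊤) (l : ℝ)
    (v : (Fin n → ℝ) × (Fin p → ℝ)) :
    scalePt α l v = (l • v.1, l ^ α.toReal • v.2) := by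
  by_cases h0 : α = 0
  · simp [scalePt, h0]
  · simp [scalePt, h0, hα]

/-- Scaling by `l ≤ 1` under `α`-returns to scale lowers the outputs by `l ^ α`, which is
at least `l ^ β`; free disposability absorbs the difference. -/
lemma satLeftRTS_of_satRTS {n p : ℕ} {α : ℝ≥0∞} {β : ℝ} {S : Set ((Fin n → ℝ) × (Fin p → ℝ))}
    (hα : α ≠ ⊤) (hαβ : α.toReal ≤ β) (hS : satRTS α S) (hfd : freeDisposal S)
    (hnn : S ⊆ nonneg n p) : satLeftRTS β S := by
  intro v hv l hl hl1
  have hscaled : (l • v.1, l ^ α.toReal • v.2) ∈ S := scalePt_of_ne_top hα l v ▸ hS v hv l hl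
  have hy : 0 ≤ v.2 := (hnn hv).2
  have hpow : l ^ β ≤ l ^ α.toReal := Real.rpow_le_rpow_of_exponent_ge hl hl1 hαβ
  exact hfd _ hscaled _ _ le_rfl (smul_nonneg (Real.rpow_nonneg hl.le β) hy)
    (smul_le_smul_of_nonneg_right hpow hy)

lemma satLeftRTS_biInter {n p : ℕ} {ι : Type*} {β : ℝ} {Λ : Set ι}
    {F : ι → Set ((Fin n → ℝ) × (Fin p → ℝ))} (hF : ∀ α ∈ Λ, satLeftRTS β (F α)) :
    satLeftRTS β (⋂ α ∈ Λ, F α) := by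
  intro v hv l hl hl1
  simp only [Set.mem_iInter] at hv ⊢
  exact fun α hα => hF α hα v (hv α hα) l hl hl1

theorem stmt4_general (n p : ℕ) (a b : ℝ≥0∞) (hb : b ≠ ⊤)
    (T : Set ((Fin n → ℝ) × (Fin p → ℝ)))
    (F : ℝ≥0∞ → Set ((Fin n → ℝ) × (Fin p → ℝ)))
    (hF : ∀ α ∈ Set.Icc a b, satRTS α (F α) ∧ freeDisposal (F α) ∧ F α ⊆ nonneg n p)
    (hT : T = ⋂ α ∈ Set.Icc a b, F α) :
    ∀ v ∈ T, ∀ l : ℝ, 0 < l → l ≤ 1 → (l • v.1, l ^ b.toReal • v.2) ∈ T := by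
  subst hT
  refine satLeftRTS_biInter fun α hα => ?_
  obtain ⟨hrts, hfd, hnn⟩ := hF α hα
  exact satLeftRTS_of_satRTS (ne_top_of_le_ne_top hb hα.2) (ENNReal.toReal_mono hb hα.2)
    hrts hfd hnn

/-- A `[α₋, α₊]`-returns to scale assumption (with `α₊ < ∞`) with freely disposable
witnesses implies a left-`α₊` returns to scale assumption. -/
theorem stmt4 (n p : ℕ) (a b : ℝ≥0∞) (hab : a ≤ b) (hb : b ≠ ⊤)
    (T : Set ((Fin n → ℝ) × (Fin p → ℝ)))
    (F : ℝ≥0∞ → Set ((Fin n → ℝ) × (Fin p → ℝ)))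
    (hF : ∀ α ∈ Set.Icc a b, satRTS α (F α) ∧ freeDisposal (F α) ∧ F α ⊆ nonneg n p)
    (hT : T = ⋂ α ∈ Set.Icc a b, F α) :
    ∀ v ∈ T, ∀ l : ℝ, 0 < l → l ≤ 1 → (l • v.1, l ^ b.toReal • v.2) ∈ T :=
  stmt4_general n p a b hb T F hF hT
end

section
/- For α ∈ (0,∞) and a point (x_k, y_k) ∈ ℝ₊ⁿ⁺ᵖ with x_k ≠ 0 and y_k ≠ 0, the set Q_{α,1}(x_k,y_k) = {(x,y) ∈ ℝ₊ⁿ⁺ᵖ : ∃λ ≥ 0, x ≥ λ^{1/α} x_k and y ≤ λ y_k} is the smallest subset of ℝ₊ⁿ⁺ᵖ containing (x_k, y_k) that satisfies free disposability, closedness, and the α-returns to scale assumption. -/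
/-- `T` satisfies an `α`-returns to scale assumption (`α` a positive real). -/
def satRTSR {n p : ℕ} (α : ℝ) (T : Set ((Fin n → ℝ) × (Fin p → ℝ))) : Prop :=
  ∀ v ∈ T, ∀ l : ℝ, 0 < l → (l • v.1, l ^ α • v.2) ∈ T

/-- The individual technology `Q_{α,1}(x_k, y_k)` as a subset of `ℝ₊ⁿ⁺ᵖ`. -/
noncomputable def QSet {n p : ℕ} (α : ℝ) (xk : Fin n → ℝ) (yk : Fin p → ℝ) :
    Set ((Fin n → ℝ) × (Fin p → ℝ)) :=
  {v | (0 ≤ v.1 ∧ 0 ≤ v.2) ∧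
    ∃ l : ℝ, 0 ≤ l ∧ l ^ (1 / α) • xk ≤ v.1 ∧ v.2 ≤ l • yk}

/-!
Writing `t = l ^ (1 / α)`, `Q_{α,1}(x_k, y_k)` is the free disposal hull of the ray
`{(t x_k, t ^ α y_k) : t ≥ 0}`. Any set with the three properties containing `(x_k, y_k)`
contains this ray for `t > 0`, and closedness supplies `t = 0`. Conversely `Q` is closed
because, some coordinate of `x_k` being positive, `t x_k ≤ x` bounds `t` continuously in `x`,
so `Q` is the projection of a closed set along a compact parameter.
-/

open Set Filter Topology

theorem isClosed_image_fst_of_mem_Icc {X : Type*} [TopologicalSpace X] {C : Set (X × ℝ)}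
    (hC : IsClosed C) {r : X → ℝ} (hr : Continuous r) (hCr : ∀ q ∈ C, q.2 ∈ Icc 0 (r q.1)) :
    IsClosed (Prod.fst '' C) := by
  let g : X × unitInterval → X × ℝ := fun q => (q.1, q.2 * r q.1)
  have hg : Continuous g := by fun_prop
  suffices Prod.fst '' C = Prod.fst '' (g ⁻¹' C) from
    this ▸ isClosedMap_fst_of_compactSpace _ (hC.preimage hg)
  ext x
  constructor
  · rintro ⟨⟨x, t⟩, hxt, rfl⟩
    obtain ⟨ht0, htr⟩ := hCr _ hxt
    have hst : t / r x * r x = t := by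
      rcases (ht0.trans htr).eq_or_lt with hr0 | hr0
      · rw [← hr0, mul_zero]
        exact le_antisymm ht0 (htr.trans hr0.ge)
      · exact div_mul_cancel₀ t hr0.ne'
    refine ⟨⟨x, ⟨t / r x, div_nonneg ht0 (ht0.trans htr), div_le_one_of_le₀ htr (ht0.trans htr)⟩⟩,
      ?_, rfl⟩
    simpa only [g, mem_preimage, hst] using hxt
  · rintro ⟨q, hq, rfl⟩
    exact ⟨g q, hq, rfl⟩

variable {n p : ℕ} {α : ℝ} {xk : Fin n → ℝ} {yk : Fin p → ℝ}

theorem mem_QSet_iff (hα : α ≠ 0) {v : (Fin n → ℝ) × (Fin p → ℝ)} :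
    v ∈ QSet α xk yk ↔
      (0 ≤ v.1 ∧ 0 ≤ v.2) ∧ ∃ t : ℝ, 0 ≤ t ∧ t • xk ≤ v.1 ∧ v.2 ≤ t ^ α • yk := by
  refine and_congr_right fun _ => ⟨?_, ?_⟩
  · rintro ⟨l, hl, hlx, hly⟩
    refine ⟨l ^ (1 / α), Real.rpow_nonneg hl _, hlx, ?_⟩
    rwa [one_div, Real.rpow_inv_rpow hl hα]
  · rintro ⟨t, ht, htx, hty⟩
    refine ⟨t ^ α, Real.rpow_nonneg ht _, ?_, hty⟩
    rwa [one_div, Real.rpow_rpow_inv ht hα]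

theorem freeDisposal_QSet : freeDisposal (QSet α xk yk) := by
  rintro v ⟨⟨hv1, -⟩, l, hl, hlx, hly⟩ u w hu hw hwv
  exact ⟨⟨hv1.trans hu, hw⟩, l, hl, hlx.trans hu, hwv.trans hly⟩

theorem satRTSR_QSet (hα : α ≠ 0) : satRTSR α (QSet α xk yk) := by
  intro v hv s hs
  obtain ⟨⟨hv1, hv2⟩, t, ht, htx, hty⟩ := (mem_QSet_iff hα).1 hv
  have hsα : 0 ≤ s ^ α := Real.rpow_nonneg hs.le α
  refine (mem_QSet_iff hα).2 ⟨⟨smul_nonneg hs.le hv1, smul_nonneg hsα hv2⟩, s * t,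
    mul_nonneg hs.le ht, ?_, ?_⟩
  · rw [mul_smul]
    exact smul_le_smul_of_nonneg_left htx hs.le
  · rw [Real.mul_rpow hs.le ht, mul_smul]
    exact smul_le_smul_of_nonneg_left hty hsα

theorem isClosed_QSet (hα : 0 < α) (hxk : 0 ≤ xk) (hxk0 : xk ≠ 0) :
    IsClosed (QSet α xk yk) := by
  obtain ⟨j, hj⟩ : ∃ j, 0 < xk j := (Pi.lt_def.1 (hxk.lt_of_ne' hxk0)).2
  let C : Set (((Fin n → ℝ) × (Fin p → ℝ)) × ℝ) :=
    {q | (0 ≤ q.1.1 ∧ 0 ≤ q.1.2) ∧ 0 ≤ q.2 ∧ q.2 • xk ≤ q.1.1 ∧ q.1.2 ≤ q.2 ^ α • yk}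
  have hQC : QSet α xk yk = Prod.fst '' C := by
    ext v
    simp [mem_QSet_iff hα.ne', C]
  have hcont : Continuous fun t : ℝ => t ^ α := Real.continuous_rpow_const hα.le
  have hC : IsClosed C := by
    simp only [C, ofPred_and]
    refine ((isClosed_le ?_ ?_).inter (isClosed_le ?_ ?_)).inter ((isClosed_le ?_ ?_).inter
      ((isClosed_le ?_ ?_).inter (isClosed_le ?_ ?_))) <;> fun_prop
  rw [hQC]
  refine isClosed_image_fst_of_mem_Icc hC (r := fun v => v.1 j / xk j) (by fun_prop) ?_
  rintro q ⟨-, hq, hqx, -⟩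
  exact ⟨hq, (le_div_iff₀ hj).2 (by simpa using hqx j)⟩

/-- Each point of `QSet` is the limit, as `ε → 0⁺`, of points disposable from
`((t + ε) • xk, (t + ε) ^ α • yk)`. -/
theorem QSet_subset_of_mem (hα : 0 < α) (hyk : 0 ≤ yk) {S : Set ((Fin n → ℝ) × (Fin p → ℝ))}
    (hS : (xk, yk) ∈ S) (hfd : freeDisposal S) (hcl : IsClosed S) (hrts : satRTSR α S) :
    QSet α xk yk ⊆ S := by
  intro v hv
  obtain ⟨⟨hv1, hv2⟩, t, ht, htx, hty⟩ := (mem_QSet_iff hα.ne').1 hv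
  have hnear : ∀ ε : ℝ, 0 < ε → (v.1 + ε • xk, v.2) ∈ S := by
    intro ε hε
    refine hfd _ (hrts _ hS (t + ε) (by positivity)) _ _ ?_ hv2 ?_
    · rw [add_smul]
      exact add_le_add_left htx _
    · exact hty.trans (smul_le_smul_of_nonneg_right
        (Real.rpow_le_rpow ht (le_add_of_nonneg_right hε.le) hα.le) hyk)
  have hlim : Tendsto (fun ε : ℝ => (v.1 + ε • xk, v.2)) (𝓝[>] 0) (𝓝 v) := by
    refine Tendsto.mono_left ?_ nhdsWithin_le_nhds
    have hcont : Continuous fun ε : ℝ => (v.1 + ε • xk, v.2) := by fun_prop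
    simpa using hcont.tendsto 0
  exact hcl.mem_of_tendsto hlim (eventually_nhdsWithin_of_forall hnear)

theorem stmt8_general (n p : ℕ) (α : ℝ) (hα : 0 < α)
    (xk : Fin n → ℝ) (yk : Fin p → ℝ)
    (hxk : 0 ≤ xk) (hyk : 0 ≤ yk) (hxk0 : xk ≠ 0) :
    (xk, yk) ∈ QSet α xk yk ∧
    QSet α xk yk ⊆ nonneg n p ∧
    freeDisposal (QSet α xk yk) ∧
    IsClosed (QSet α xk yk) ∧
    satRTSR α (QSet α xk yk) ∧
    ∀ S : Set ((Fin n → ℝ) × (Fin p → ℝ)), S ⊆ nonneg n p → (xk, yk) ∈ S →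
      freeDisposal S → IsClosed S → satRTSR α S → QSet α xk yk ⊆ S :=
  ⟨⟨⟨hxk, hyk⟩, 1, zero_le_one, by simp, by simp⟩, fun _ hv => hv.1, freeDisposal_QSet,
    isClosed_QSet hα hxk hxk0, satRTSR_QSet hα.ne',
    fun _ _ hS hfd hcl hrts => QSet_subset_of_mem hα hyk hS hfd hcl hrts⟩

/-- `Q_{α,1}(x_k,y_k)` is the smallest subset of `ℝ₊ⁿ⁺ᵖ` containing `(x_k, y_k)` that is
freely disposable, closed, and satisfies an `α`-returns to scale assumption. -/
theorem stmt8 (n p : ℕ) (α : ℝ) (hα : 0 < α)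
    (xk : Fin n → ℝ) (yk : Fin p → ℝ)
    (hxk : 0 ≤ xk) (hyk : 0 ≤ yk) (hxk0 : xk ≠ 0) (hyk0 : yk ≠ 0) :
    (xk, yk) ∈ QSet α xk yk ∧
    QSet α xk yk ⊆ nonneg n p ∧
    freeDisposal (QSet α xk yk) ∧
    IsClosed (QSet α xk yk) ∧
    satRTSR α (QSet α xk yk) ∧
    ∀ S : Set ((Fin n → ℝ) × (Fin p → ℝ)), S ⊆ nonneg n p → (xk, yk) ∈ S →
      freeDisposal S → IsClosed S → satRTSR α S → QSet α xk yk ⊆ S :=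
  stmt8_general n p α hα xk yk hxk hyk hxk0
end

section
/- For α ∈ (0,∞), (x_k, y_k) ∈ ℝ₊ⁿ⁺ᵖ with strictly positive components, and (x,y) ∈ ℝ₊ⁿ⁺ᵖ with x strictly positive and y ≠ 0, the Farrell input measure over the individual technology Q_{α,1}(x_k,y_k) satisfies φ^{(k)}(x,y) = inf{θ ≥ 0 : (θx, y) ∈ Q_{α,1}(x_k,y_k)} = (max_h y_h/y_{k,h})^{1/α} · (max_i x_{k,i}/x_i). -/
/-!
A componentwise inequality `u ≤ t • v` with `v > 0` says exactly that `t` dominates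
`max_i u_i / v_i`. Hence `(θx, y) ∈ Q_{α,1}(x_k, y_k)` with witness `λ` means
`λ ≥ L := max_h y_h / y_{k,h}` and `θ ≥ λ^{1/α} M` with `M := max_i x_{k,i} / x_i`.
Since `λ ↦ λ^{1/α}` is monotone, `λ = L` is the best witness, so the feasible `θ`
form the ray `[L^{1/α} M, ∞)`.
-/

section

variable {ι : Type*} [Fintype ι]

theorem Pi.le_smul_iff_iSup_div_le {u v : ι → ℝ} (hv : ∀ i, 0 < v i) {t : ℝ} (ht : 0 ≤ t) :
    u ≤ t • v ↔ ⨆ i, u i / v i ≤ t := by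
  simp only [Pi.le_def, Pi.smul_apply, smul_eq_mul]
  constructor
  · intro h
    exact Real.iSup_le (fun i => (div_le_iff₀ (hv i)).2 (h i)) ht
  · intro h i
    exact (div_le_iff₀ (hv i)).1 ((le_ciSup (Set.finite_range _).bddAbove i).trans h)

theorem Pi.smul_le_smul_iff_mul_iSup_div_le {u v : ι → ℝ} (hv : ∀ i, 0 < v i) {c t : ℝ}
    (hc : 0 ≤ c) (ht : 0 ≤ t) : c • u ≤ t • v ↔ c * ⨆ i, u i / v i ≤ t := by
  rw [Pi.le_smul_iff_iSup_div_le hv ht, Real.mul_iSup_of_nonneg hc]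
  simp only [Pi.smul_apply, smul_eq_mul, mul_div_assoc]

end

theorem smul_mem_QSet_iff {n p : ℕ} {α : ℝ} (hα : 0 < α) {xk x : Fin n → ℝ} {yk y : Fin p → ℝ}
    (hxk : ∀ i, 0 ≤ xk i) (hyk : ∀ h, 0 < yk h) (hx : ∀ i, 0 < x i) (hy : 0 ≤ y)
    {θ : ℝ} (hθ : 0 ≤ θ) :
    (θ • x, y) ∈ QSet α xk yk ↔ (⨆ h, y h / yk h) ^ (1 / α) * ⨆ i, xk i / x i ≤ θ := by
  have hL : 0 ≤ ⨆ h, y h / yk h := Real.iSup_nonneg fun h => div_nonneg (hy h) (hyk h).le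
  have hM : 0 ≤ ⨆ i, xk i / x i := Real.iSup_nonneg fun i => div_nonneg (hxk i) (hx i).le
  have hθx : 0 ≤ θ • x := smul_nonneg hθ fun i => (hx i).le
  simp only [QSet, Set.mem_ofPred_eq, hθx, hy, and_self, true_and]
  constructor
  · rintro ⟨l, hl, hlx, hly⟩
    rw [Pi.smul_le_smul_iff_mul_iSup_div_le hx (Real.rpow_nonneg hl _) hθ] at hlx
    rw [Pi.le_smul_iff_iSup_div_le hyk hl] at hly
    calc _ ≤ l ^ (1 / α) * ⨆ i, xk i / x i := by gcongr
      _ ≤ θ := hlx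
  · intro h
    exact ⟨_, hL, (Pi.smul_le_smul_iff_mul_iSup_div_le hx (Real.rpow_nonneg hL _) hθ).2 h,
      (Pi.le_smul_iff_iSup_div_le hyk hL).2 le_rfl⟩

theorem stmt11_general (n p : ℕ) (α : ℝ) (hα : 0 < α)
    (xk x : Fin n → ℝ) (yk y : Fin p → ℝ)
    (hxk : ∀ i, 0 < xk i) (hyk : ∀ h, 0 < yk h)
    (hx : ∀ i, 0 < x i) (hy : 0 ≤ y) :
    sInf {θ : ℝ | 0 ≤ θ ∧ (θ • x, y) ∈ QSet α xk yk} =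
      (⨆ h, y h / yk h) ^ (1 / α) * ⨆ i, xk i / x i := by
  set c := (⨆ h, y h / yk h) ^ (1 / α) * ⨆ i, xk i / x i
  have hc : 0 ≤ c :=
    mul_nonneg (Real.rpow_nonneg (Real.iSup_nonneg fun h => div_nonneg (hy h) (hyk h).le) _)
      (Real.iSup_nonneg fun i => div_nonneg (hxk i).le (hx i).le)
  have hfeasible : {θ : ℝ | 0 ≤ θ ∧ (θ • x, y) ∈ QSet α xk yk} = Set.Ici c := by
    ext θ
    constructor
    · rintro ⟨hθ, hmem⟩
      exact (smul_mem_QSet_iff hα (fun i => (hxk i).le) hyk hx hy hθ).1 hmem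
    · intro hcθ
      have hθ : 0 ≤ θ := hc.trans hcθ
      exact ⟨hθ, (smul_mem_QSet_iff hα (fun i => (hxk i).le) hyk hx hy hθ).2 hcθ⟩
  rw [hfeasible, csInf_Ici]

/-- Closed form of the Farrell input measure over the individual technology
`Q_{α,1}(x_k, y_k)`. -/
theorem stmt11 (n p : ℕ) (α : ℝ) (hα : 0 < α)
    (xk x : Fin n → ℝ) (yk y : Fin p → ℝ)
    (hxk : ∀ i, 0 < xk i) (hyk : ∀ h, 0 < yk h)
    (hx : ∀ i, 0 < x i) (hy : 0 ≤ y) (hy0 : y ≠ 0) :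
    sInf {θ : ℝ | 0 ≤ θ ∧ (θ • x, y) ∈ QSet α xk yk} =
      (⨆ h, y h / yk h) ^ (1 / α) * ⨆ i, xk i / x i :=
  stmt11_general n p α hα xk x yk y hxk hyk hx hy
end
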